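/- arXiv:1810.07228 — 2 statements merged into one kernel-verified Lean document; each statement's English description precedes it below -/
import Mathlib

section
/- Let X(t) be the normalized fundamental matrix of x' = A(t)x, where A is continuous and T-periodic, and assume det(I − X(T)) ≠ 0. Then for every continuous T-periodic f with values in ℂⁿ, there exists a unique T-periodic solution x of x' = A(t)x + f(t); moreover x(0) = (I − X(T))⁻¹ ∫₀ᵀ X(T)X(s)⁻¹ f(s) ds. -/
/-!
By uniqueness for linear equations with continuous coefficients, every solution of
`x' = A x + f` is given by the variation-of-constants formula
`x t = X t (x 0 + ∫₀ᵗ (X s)⁻¹ f s ds)`. Since `A` and `f` are `T`-periodic, `t ↦ x (t + T)` is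
again a solution, so by uniqueness `x` is `T`-periodic iff `x T = x 0`, that is, iff
`(1 - X T) x 0 = ∫₀ᵀ X T (X s)⁻¹ f s ds`. This linear system has exactly one solution because
`1 - X T` is invertible.
-/

open Matrix MeasureTheory intervalIntegral Set

section LinearODE

variable {𝕜 E : Type*} [NontriviallyNormedField 𝕜] [NormedAddCommGroup E] [NormedSpace 𝕜 E]
  [NormedSpace ℝ E] {A : ℝ → E →L[𝕜] E} {f u w : ℝ → E}

theorem linearODE_solution_unique (hA : Continuous A)
    (hu : ∀ t, HasDerivAt u (A t (u t) + f t) t) (hw : ∀ t, HasDerivAt w (A t (w t) + f t) t)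
    {t₀ : ℝ} (h : u t₀ = w t₀) : u = w := by
  funext t
  obtain ⟨a, b, ht, ht₀⟩ : ∃ a b, t ∈ Ioo a b ∧ t₀ ∈ Ioo a b :=
    ⟨min t t₀ - 1, max t t₀ + 1, by grind, by grind⟩
  obtain ⟨K, hK⟩ := ((isCompact_Icc (a := a) (b := b)).image hA.nnnorm).bddAbove
  have hlip (s : ℝ) (hs : s ∈ Ioo a b) : LipschitzWith K (fun x => A s x + f s) := by
    have hAs := (A s).lipschitz.weaken (hK (mem_image_of_mem _ (Ioo_subset_Icc_self hs)))
    simpa using hAs.add (LipschitzWith.const (f s))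
  exact ODE_solution_unique_of_mem_Ioo (fun s hs => (hlip s hs).lipschitzOnWith (s := univ)) ht₀
    (fun s _ => ⟨hu s, trivial⟩) (fun s _ => ⟨hw s, trivial⟩) h ht

end LinearODE

theorem HasDerivAt.matrix_mulVec {𝕜 m n : Type*} [NormedCommRing 𝕜] [NormedAlgebra ℝ 𝕜]
    [Fintype n] {X : ℝ → Matrix m n 𝕜} {X' : Matrix m n 𝕜} {v : ℝ → n → 𝕜} {v' : n → 𝕜} {t : ℝ}
    (hX : ∀ i j, HasDerivAt (fun s => X s i j) (X' i j) t) (hv : HasDerivAt v v' t) :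
    HasDerivAt (fun s => X s *ᵥ v s) (X' *ᵥ v t + X t *ᵥ v') t := by
  refine hasDerivAt_pi.2 fun i => ?_
  have hsum := HasDerivAt.fun_sum fun j (_ : j ∈ Finset.univ) => (hX i j).mul (hasDerivAt_pi.1 hv j)
  simpa [mulVec, dotProduct, Finset.sum_add_distrib] using hsum

variable {m : Type*} [Fintype m] [DecidableEq m]

theorem Matrix.mulVec_add_eq_self_iff {R : Type*} [CommRing R] {M : Matrix m m R}
    (hM : IsUnit (1 - M).det) {v b : m → R} : M *ᵥ v + b = v ↔ v = (1 - M)⁻¹ *ᵥ b := by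
  have hsub : (1 - M) *ᵥ v = v - M *ᵥ v := by rw [sub_mulVec, one_mulVec]
  rw [eq_comm, ← sub_eq_iff_eq_add', ← hsub]
  exact ⟨fun h => by rw [← h, mulVec_mulVec, nonsing_inv_mul _ hM, one_mulVec],
    fun h => by rw [h, mulVec_mulVec, mul_nonsing_inv _ hM, one_mulVec]⟩

theorem Continuous.matrix_inv {α R : Type*} [TopologicalSpace α] [NormedCommRing R]
    [HasSummableGeomSeries R] {X : α → Matrix m m R} (hX : Continuous X)
    (hXu : ∀ t, IsUnit (X t)) : Continuous fun t => (X t)⁻¹ :=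
  continuous_iff_continuousAt.2 fun t =>
    (continuousAt_matrix_inv _ (NormedRing.inverse_continuousAt
      ((X t).isUnit_iff_isUnit_det.1 (hXu t)).unit)).comp hX.continuousAt

variable {𝕜 : Type*} [RCLike 𝕜]

theorem Matrix.linearODE_solution_unique {A : ℝ → Matrix m m 𝕜} (hA : Continuous A)
    {f u w : ℝ → m → 𝕜} (hu : ∀ t, HasDerivAt u (A t *ᵥ u t + f t) t)
    (hw : ∀ t, HasDerivAt w (A t *ᵥ w t + f t) t) {t₀ : ℝ} (h : u t₀ = w t₀) : u = w := by
  let L : Matrix m m 𝕜 →ₗ[𝕜] (m → 𝕜) →L[𝕜] m → 𝕜 :=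
    LinearMap.toContinuousLinearMap.toLinearMap ∘ₗ toLin'.toLinearMap
  exact _root_.linearODE_solution_unique (A := fun t => L (A t))
    (L.continuous_of_finiteDimensional.comp hA) hu hw h

theorem Matrix.linearODE_periodic_iff {A : ℝ → Matrix m m 𝕜} (hA : Continuous A)
    {f u : ℝ → m → 𝕜} {T : ℝ} (hAper : Function.Periodic A T) (hfper : Function.Periodic f T)
    (hu : ∀ t, HasDerivAt u (A t *ᵥ u t + f t) t) : Function.Periodic u T ↔ u T = u 0 := by
  refine ⟨fun h => by simpa using h 0, fun h => congrFun ?_⟩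
  have hshift (t : ℝ) : HasDerivAt (fun s => u (s + T)) (A t *ᵥ u (t + T) + f t) t := by
    simpa only [hAper t, hfper t] using (hu (t + T)).comp_add_const t T
  exact Matrix.linearODE_solution_unique hA hshift hu (t₀ := 0) (by simpa using h)

section VariationOfConstants

variable {X : ℝ → Matrix m m 𝕜} {f : ℝ → m → 𝕜}

noncomputable def variationOfConstants (X : ℝ → Matrix m m 𝕜) (f : ℝ → m → 𝕜) (x₀ : m → 𝕜)
    (t : ℝ) : m → 𝕜 :=
  X t *ᵥ (x₀ + ∫ s in (0 : ℝ)..t, (X s)⁻¹ *ᵥ f s)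

theorem variationOfConstants_zero (hX0 : X 0 = 1) (x₀ : m → 𝕜) :
    variationOfConstants X f x₀ 0 = x₀ := by
  simp [variationOfConstants, hX0]

theorem variationOfConstants_eq {x₀ : m → 𝕜} {t : ℝ}
    (hint : IntervalIntegrable (fun s => (X s)⁻¹ *ᵥ f s) volume 0 t) :
    variationOfConstants X f x₀ t = X t *ᵥ x₀ + ∫ s in (0 : ℝ)..t, (X t * (X s)⁻¹) *ᵥ f s := by
  simp only [variationOfConstants, mulVec_add, ← mulVec_mulVec]
  congr 1
  exact ((X t).mulVecLin.toContinuousLinearMap.intervalIntegral_comp_comm hint).symm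

theorem hasDerivAt_variationOfConstants {A : ℝ → Matrix m m 𝕜}
    (hX : ∀ t i j, HasDerivAt (fun s => X s i j) ((A t * X t) i j) t) (hXu : ∀ t, IsUnit (X t))
    (hf : Continuous f) (x₀ : m → 𝕜) (t : ℝ) :
    HasDerivAt (variationOfConstants X f x₀)
      (A t *ᵥ variationOfConstants X f x₀ t + f t) t := by
  have hXc : Continuous X := continuous_matrix fun i j =>
    continuous_iff_continuousAt.2 fun t => (hX t i j).continuousAt
  have hint := ((hXc.matrix_inv hXu).matrix_mulVec hf).integral_hasStrictDerivAt 0 t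
  have hcancel : X t *ᵥ ((X t)⁻¹ *ᵥ f t) = f t := by
    rw [mulVec_mulVec, mul_nonsing_inv _ ((X t).isUnit_iff_isUnit_det.1 (hXu t)), one_mulVec]
  have hd := HasDerivAt.matrix_mulVec (hX t) (hint.hasDerivAt.const_add x₀)
  rwa [hcancel, ← mulVec_mulVec] at hd

end VariationOfConstants

theorem periodic_linear_system_unique_periodic_solution_general
    {n : ℕ} (T : ℝ)
    (A : ℝ → Matrix (Fin n) (Fin n) ℂ)
    (hA : ∀ i j, Continuous fun t => A t i j) (hAper : ∀ t, A (t + T) = A t)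
    (f : ℝ → Fin n → ℂ) (hf : Continuous f) (hfper : ∀ t, f (t + T) = f t)
    (X : ℝ → Matrix (Fin n) (Fin n) ℂ)
    (hX : ∀ t i j, HasDerivAt (fun s => X s i j) ((A t * X t) i j) t)
    (hX0 : X 0 = 1) (hXu : ∀ t, IsUnit (X t))
    (hdet : (1 - X T).det ≠ 0) :
    (∃! x : ℝ → Fin n → ℂ,
        (∀ t, HasDerivAt x (A t *ᵥ x t + f t) t) ∧ (∀ t, x (t + T) = x t)) ∧
      ∀ x : ℝ → Fin n → ℂ,
        ((∀ t, HasDerivAt x (A t *ᵥ x t + f t) t) ∧ (∀ t, x (t + T) = x t)) →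
          x 0 = (1 - X T)⁻¹ *ᵥ ∫ s in (0:ℝ)..T, (X T * (X s)⁻¹) *ᵥ f s := by
  have hAc : Continuous A := continuous_matrix hA
  have hXc : Continuous X := continuous_matrix fun i j =>
    continuous_iff_continuousAt.2 fun t => (hX t i j).continuousAt
  set x₀ := (1 - X T)⁻¹ *ᵥ ∫ s in (0:ℝ)..T, (X T * (X s)⁻¹) *ᵥ f s
  have hsol := hasDerivAt_variationOfConstants hX hXu hf
  have heq (x : ℝ → Fin n → ℂ) (hx : ∀ t, HasDerivAt x (A t *ᵥ x t + f t) t) :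
      x = variationOfConstants X f (x 0) :=
    Matrix.linearODE_solution_unique hAc hx (hsol _) (variationOfConstants_zero hX0 _).symm
  have hperiodic (x : ℝ → Fin n → ℂ) (hx : ∀ t, HasDerivAt x (A t *ᵥ x t + f t) t) :
      Function.Periodic x T ↔ x 0 = x₀ := by
    rw [Matrix.linearODE_periodic_iff hAc hAper hfper hx, congrFun (heq x hx) T,
      variationOfConstants_eq (((hXc.matrix_inv hXu).matrix_mulVec hf).intervalIntegrable _ _),
      Matrix.mulVec_add_eq_self_iff (isUnit_iff_ne_zero.2 hdet)]
  refine ⟨⟨variationOfConstants X f x₀, ⟨hsol x₀, ?_⟩, fun y ⟨hy, hyper⟩ => ?_⟩,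
    fun x ⟨hx, hxper⟩ => (hperiodic x hx).1 hxper⟩
  · exact (hperiodic _ (hsol x₀)).2 (variationOfConstants_zero hX0 x₀)
  · rw [heq y hy, (hperiodic y hy).1 hyper]

theorem periodic_linear_system_unique_periodic_solution
    {n : ℕ} (T : ℝ) (hT : 0 < T)
    (A : ℝ → Matrix (Fin n) (Fin n) ℂ)
    (hA : ∀ i j, Continuous fun t => A t i j) (hAper : ∀ t, A (t + T) = A t)
    (f : ℝ → Fin n → ℂ) (hf : Continuous f) (hfper : ∀ t, f (t + T) = f t)
    (X : ℝ → Matrix (Fin n) (Fin n) ℂ)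
    (hX : ∀ t i j, HasDerivAt (fun s => X s i j) ((A t * X t) i j) t)
    (hX0 : X 0 = 1) (hXu : ∀ t, IsUnit (X t))
    (hdet : (1 - X T).det ≠ 0) :
    (∃! x : ℝ → Fin n → ℂ,
        (∀ t, HasDerivAt x (A t *ᵥ x t + f t) t) ∧ (∀ t, x (t + T) = x t)) ∧
      ∀ x : ℝ → Fin n → ℂ,
        ((∀ t, HasDerivAt x (A t *ᵥ x t + f t) t) ∧ (∀ t, x (t + T) = x t)) →
          x 0 = (1 - X T)⁻¹ *ᵥ ∫ s in (0:ℝ)..T, (X T * (X s)⁻¹) *ᵥ f s :=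
  periodic_linear_system_unique_periodic_solution_general T A hA hAper f hf hfper X hX hX0 hXu hdet
end

section
/- Let Z(t) be the normalized fundamental matrix of −z' = A(t)*z with det(I − Z(T)) ≠ 0, let 0 < t₁ < T, and h ∈ ℂⁿ. Then the unique function z : [0,T] → ℂⁿ satisfying −z' = A(t)*z on (0,T)\{t₁}, the jump condition z(t₁+0) − z(t₁−0) = h, and periodicity z(0) = z(T), is given by z(t) = Z(t)·M(t)·Z(t₁)⁻¹ h, where M(t) = (I − Z(T))⁻¹Z(T) + χ_{(t₁,T)}(t)·I. -/
open Matrix Set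

/-!
On each side of `t₁` the solution is `Z` applied to a constant vector, by uniqueness for linear
ODEs with continuous coefficients: `z = Z c` on `[0, t₁]` with `c = z(0)`, and the jump shifts the
constant by `w = Z(t₁)⁻¹ h`, so `z = Z (c + w)` on `[t₁, T]`. Periodicity reads
`c = Z(T) (c + w)`, which determines `c = (1 - Z(T))⁻¹ Z(T) w` because `1 - Z(T)` is invertible.
-/

section LinearODE

variable {𝕜 : Type*} [RCLike 𝕜] {m : Type*} [Fintype m]

theorem hasDerivAt_mulVec_of_hasDerivAt_apply {l : Type*} {M : ℝ → Matrix l m 𝕜}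
    {M' : Matrix l m 𝕜} {t : ℝ} (hM : ∀ i j, HasDerivAt (fun s => M s i j) (M' i j) t)
    (c : m → 𝕜) : HasDerivAt (fun s => M s *ᵥ c) (M' *ᵥ c) t :=
  hasDerivAt_pi.mpr fun i => HasDerivAt.fun_sum fun j _ => (hM i j).mul_const (c j)

section LinftyNorm

attribute [local instance] Matrix.linftyOpNormedAddCommGroup

theorem exists_lipschitzWith_mulVec_of_continuousOn {X : Type*} [TopologicalSpace X]
    {B : X → Matrix m m 𝕜} {s : Set X} (hs : IsCompact s) (hB : ContinuousOn B s) :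
    ∃ K, ∀ x ∈ s, LipschitzWith K (B x *ᵥ ·) := by
  obtain ⟨C, hC⟩ := hs.exists_bound_of_continuousOn hB
  refine ⟨C.toNNReal, fun x hx => LipschitzWith.of_dist_le_mul fun u v => ?_⟩
  rw [dist_eq_norm, dist_eq_norm, ← mulVec_sub, Real.coe_toNNReal']
  exact (linfty_opNorm_mulVec _ _).trans
    (mul_le_mul_of_nonneg_right ((hC x hx).trans (le_max_left _ _)) (norm_nonneg _))

end LinftyNorm

theorem eqOn_Icc_of_hasDerivAt_mulVec {B : ℝ → Matrix m m 𝕜} {a b : ℝ}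
    (hB : ContinuousOn B (Icc a b)) {y₁ y₂ : ℝ → m → 𝕜}
    (hy₁ : ∀ t ∈ Icc a b, HasDerivAt y₁ (B t *ᵥ y₁ t) t)
    (hy₂ : ∀ t ∈ Icc a b, HasDerivAt y₂ (B t *ᵥ y₂ t) t) (ha : y₁ a = y₂ a) :
    EqOn y₁ y₂ (Icc a b) := by
  obtain ⟨K, hK⟩ := exists_lipschitzWith_mulVec_of_continuousOn isCompact_Icc hB
  exact ODE_solution_unique_of_mem_Icc_right (s := fun _ => univ)
    (fun t ht => (hK t (Ico_subset_Icc_self ht)).lipschitzOnWith)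
    (HasDerivAt.continuousOn hy₁)
    (fun t ht => (hy₁ t (Ico_subset_Icc_self ht)).hasDerivWithinAt) (fun _ _ => mem_univ _)
    (HasDerivAt.continuousOn hy₂)
    (fun t ht => (hy₂ t (Ico_subset_Icc_self ht)).hasDerivWithinAt) (fun _ _ => mem_univ _) ha

theorem eqOn_Icc_fundamental_mulVec {B Z : ℝ → Matrix m m 𝕜} {a b : ℝ}
    (hB : ContinuousOn B (Icc a b))
    (hZ : ∀ t ∈ Icc a b, ∀ i j, HasDerivAt (fun s => Z s i j) ((B t * Z t) i j) t)
    {y : ℝ → m → 𝕜}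
    (hy : ∀ t ∈ Icc a b, HasDerivAt y (B t *ᵥ y t) t) {c : m → 𝕜} (ha : y a = Z a *ᵥ c) :
    EqOn y (fun s => Z s *ᵥ c) (Icc a b) :=
  eqOn_Icc_of_hasDerivAt_mulVec hB hy
    (fun t ht => by
      simpa only [mulVec_mulVec] using hasDerivAt_mulVec_of_hasDerivAt_apply (hZ t ht) c) ha

end LinearODE

theorem Matrix.eq_inv_one_sub_mul_mulVec_of_eq_mulVec_add {R : Type*} [CommRing R]
    {m : Type*} [Fintype m] [DecidableEq m] {M : Matrix m m R} (hM : IsUnit (1 - M).det)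
    {c w : m → R} (hc : c = M *ᵥ (c + w)) : c = ((1 - M)⁻¹ * M) *ᵥ w := by
  have hfix : (1 - M) *ᵥ c = M *ᵥ w := by
    rw [sub_mulVec, one_mulVec, sub_eq_iff_eq_add', ← mulVec_add, ← hc]
  rw [← mulVec_mulVec, ← hfix, mulVec_mulVec, nonsing_inv_mul _ hM, one_mulVec]

theorem jump_problem_solution_formula
    {n : ℕ} (T t₁ : ℝ) (ht₁ : 0 < t₁) (ht₁T : t₁ < T)
    (A Z : ℝ → Matrix (Fin n) (Fin n) ℂ)
    (hA : ∀ i j, Continuous fun t => A t i j)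
    (hZ : ∀ t i j, HasDerivAt (fun s => Z s i j) ((-((A t)ᴴ * Z t)) i j) t)
    (hZ0 : Z 0 = 1) (hZu : ∀ t, IsUnit (Z t))
    (hdet : (1 - Z T).det ≠ 0)
    (h : Fin n → ℂ) (z₁ z₂ : ℝ → Fin n → ℂ)
    (hz₁ : ∀ t ∈ Set.Icc (0 : ℝ) t₁, HasDerivAt z₁ (-((A t)ᴴ *ᵥ z₁ t)) t)
    (hz₂ : ∀ t ∈ Set.Icc t₁ T, HasDerivAt z₂ (-((A t)ᴴ *ᵥ z₂ t)) t)
    (hjump : z₂ t₁ = z₁ t₁ + h) (hper : z₂ T = z₁ 0) :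
    ∀ t ∈ Set.Ico (0 : ℝ) T,
      (if t ≤ t₁ then z₁ t else z₂ t) =
        (Z t * ((1 - Z T)⁻¹ * Z T +
          (if t₁ < t then (1 : Matrix (Fin n) (Fin n) ℂ) else 0)) * (Z t₁)⁻¹) *ᵥ h := by
  have hB : Continuous fun t => -(A t)ᴴ :=
    (continuous_pi fun i => continuous_pi fun j => hA i j).matrix_conjTranspose.neg
  have hZB : ∀ t i j, HasDerivAt (fun s => Z s i j) ((-(A t)ᴴ * Z t) i j) t := by
    simpa only [neg_mul] using hZ
  set w := (Z t₁)⁻¹ *ᵥ h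
  have e₁ : EqOn z₁ (fun s => Z s *ᵥ z₁ 0) (Icc 0 t₁) :=
    eqOn_Icc_fundamental_mulVec hB.continuousOn (fun t _ => hZB t)
      (by simpa only [neg_mulVec] using hz₁) (by rw [hZ0, one_mulVec])
  have e₂ : EqOn z₂ (fun s => Z s *ᵥ (z₁ 0 + w)) (Icc t₁ T) :=
    eqOn_Icc_fundamental_mulVec hB.continuousOn (fun t _ => hZB t)
      (by simpa only [neg_mulVec] using hz₂)
      (by rw [hjump, e₁ ⟨ht₁.le, le_rfl⟩, mulVec_add, mulVec_mulVec,
        mul_nonsing_inv _ ((isUnit_iff_isUnit_det _).mp (hZu t₁)), one_mulVec])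
  have hc : z₁ 0 = ((1 - Z T)⁻¹ * Z T) *ᵥ w :=
    eq_inv_one_sub_mul_mulVec_of_eq_mulVec_add (isUnit_iff_ne_zero.mpr hdet)
      (hper.symm.trans (e₂ ⟨ht₁T.le, le_rfl⟩))
  rintro t ⟨ht0, htT⟩
  by_cases hle : t ≤ t₁
  · rw [if_pos hle, if_neg hle.not_gt, add_zero, e₁ ⟨ht0, hle⟩, hc]
    simp only [w, mulVec_mulVec, Matrix.mul_assoc]
  · rw [if_neg hle, if_pos (not_le.mp hle), e₂ ⟨(not_le.mp hle).le, htT.le⟩, hc]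
    simp only [w, mulVec_mulVec, mulVec_add, add_mulVec, Matrix.mul_add, Matrix.add_mul,
      Matrix.mul_one, Matrix.mul_assoc]
end
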